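/- arXiv:1401.4850 — 4 statements merged into one kernel-verified Lean document; each statement's English description precedes it below -/
import Mathlib

section
/- For every real z > 0, the function ν ↦ J_ν(z) is differentiable on ℂ, and its derivative with respect to the order ν satisfies ∂/∂ν J_ν(z) = J_ν(z)·log(z/2) + (z/2)^ν · ∑_{m=0}^∞ G^{(1)}(ν+1+m) · (−z²/4)^m / m!. -/
open scoped BigOperators

/-- The reciprocal of the complex Gamma function, an entire function
(Mathlib's `Complex.Gamma` vanishes at nonpositive integers, so the inverse is `0` there). -/
noncomputable def Grec (t : ℂ) : ℂ := (Complex.Gamma t)⁻¹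

/-- `G k t` is the `k`-th derivative of the reciprocal Gamma function at `t`. -/
noncomputable def G (k : ℕ) (t : ℂ) : ℂ := iteratedDeriv k Grec t

/-- The Maclaurin coefficients of `1/Γ`: `c j = G^{(j)}(0)/j!`. -/
noncomputable def mcCoeff (j : ℕ) : ℂ := iteratedDeriv j Grec 0 / (j.factorial : ℂ)

/-- Bessel function of the first kind `J_ν(z)` for real `z > 0` and complex order `ν`,
with `(z/2)^ν = exp (ν log (z/2))`. -/
noncomputable def besselJ (z : ℝ) (ν : ℂ) : ℂ :=
  Complex.exp (ν * Complex.log ((z : ℂ) / 2)) *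
    ∑' m : ℕ, (-(z : ℂ) ^ 2 / 4) ^ m / ((m.factorial : ℂ) * Complex.Gamma (ν + 1 + m))

/-- Pochhammer symbol `(t)_m = t (t+1) ⋯ (t+m-1)`. -/
noncomputable def poch (t : ℂ) (m : ℕ) : ℂ := ∏ i ∈ Finset.range m, (t + i)

/-- `P m k t = (1/k!) dᵏ/dtᵏ (t)_m`. -/
noncomputable def P (m k : ℕ) (t : ℂ) : ℂ :=
  ((k.factorial : ℂ))⁻¹ * iteratedDeriv k (fun s => poch s m) t

/-- `Q m k t = (1/k!) dᵏ/dtᵏ (1/(t)_m)`. -/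
noncomputable def Q (m k : ℕ) (t : ℂ) : ℂ :=
  ((k.factorial : ℂ))⁻¹ * iteratedDeriv k (fun s => (poch s m)⁻¹) t

/-- Signed Stirling numbers of the first kind: `s(n,k)` is the coefficient of `x^k`
in `x(x-1)⋯(x-n+1)`. -/
noncomputable def stirS (n k : ℕ) : ℤ := (descPochhammer ℤ n).coeff k

/-- Modified generalized harmonic numbers `Ĥ_m^{(k)}`. -/
noncomputable def Hhat (m k : ℕ) : ℝ :=
  if m = 0 then (if k = 0 then 1 else 0)
  else ∑ j ∈ Finset.Icc 1 m, (-1 : ℝ) ^ (j - 1) * (m.choose j) / (j : ℝ) ^ k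

/-- Digamma function `ψ = Γ'/Γ`. -/
noncomputable def digamma (t : ℂ) : ℂ := deriv Complex.Gamma t / Complex.Gamma t

/-! Each term `wᵐ/m! · (1/Γ)(ν+1+m)` of the Bessel series is entire in `ν`. The recurrence
`1/Γ(t) = t · 1/Γ(t+1)` shows that `‖1/Γ(t+m)‖` does not increase in `m` once `Re t ≥ 1`,
so `1/Γ(ν+1+m)` is bounded uniformly in `m` for `ν` in a compact set, and the series converges
locally uniformly. Weierstrass' theorem then allows termwise differentiation, and the product
rule with `d/dν exp(ν log(z/2)) = exp(ν log(z/2)) log(z/2)` gives the formula. -/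

theorem differentiable_Grec : Differentiable ℂ Grec :=
  Complex.differentiable_one_div_Gamma

theorem Grec_eq_mul_Grec_add_one (t : ℂ) : Grec t = t * Grec (t + 1) := by
  simpa only [Grec, one_div] using Complex.one_div_Gamma_eq_self_mul_one_div_Gamma_add_one t

theorem norm_Grec_add_nat_le {t : ℂ} (ht : 1 ≤ t.re) (k : ℕ) : ‖Grec (t + k)‖ ≤ ‖Grec t‖ := by
  induction k with
  | zero => simp
  | succ k ih =>
    have h_one_le : 1 ≤ ‖t + k‖ :=
      ht.trans <| (by simp : t.re ≤ (t + k).re).trans (Complex.re_le_norm _)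
    calc ‖Grec (t + (k + 1 : ℕ))‖ ≤ ‖t + k‖ * ‖Grec (t + k + 1)‖ := by
          push_cast
          rw [← add_assoc]
          exact le_mul_of_one_le_left (norm_nonneg _) h_one_le
      _ = ‖Grec (t + k)‖ := by rw [Grec_eq_mul_Grec_add_one (t + k), norm_mul]
      _ ≤ ‖Grec t‖ := ih

theorem exists_bound_Grec_add_nat {K : Set ℂ} (hK : IsCompact K) :
    ∃ C, ∀ t ∈ K, ∀ m : ℕ, ‖Grec (t + m)‖ ≤ C := by
  obtain ⟨R, hR⟩ := hK.isBounded.exists_norm_le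
  obtain ⟨N, hN⟩ := exists_nat_gt (R + 1)
  have h_re : ∀ t ∈ K, 1 ≤ (t + N).re := fun t ht => by
    have := (Complex.abs_re_le_norm t).trans (hR t ht)
    simp only [Complex.add_re, Complex.natCast_re]
    linarith [neg_abs_le t.re]
  obtain ⟨C, hC⟩ := (hK.add (isCompact_closedBall 0 N)).exists_bound_of_continuousOn
    differentiable_Grec.continuous.continuousOn
  have h_small : ∀ t ∈ K, ∀ m ≤ N, ‖Grec (t + m)‖ ≤ C := fun t ht m hm =>
    hC _ <| Set.add_mem_add ht <| by simpa using hm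
  refine ⟨C, fun t ht m => ?_⟩
  rcases le_total m N with hm | hm
  · exact h_small t ht m hm
  · obtain ⟨k, rfl⟩ := Nat.exists_eq_add_of_le hm
    calc ‖Grec (t + (N + k : ℕ))‖ = ‖Grec (t + N + k)‖ := by push_cast; rw [add_assoc]
      _ ≤ ‖Grec (t + N)‖ := norm_Grec_add_nat_le (h_re t ht) k
      _ ≤ C := h_small t ht N le_rfl

theorem hasDerivAt_tsum_mul_Grec (w ν : ℂ) :
    HasDerivAt (fun s => ∑' m : ℕ, w ^ m / m.factorial * Grec (s + 1 + m))
      (∑' m : ℕ, G 1 (ν + 1 + m) * w ^ m / m.factorial) ν := by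
  set F : ℕ → ℂ → ℂ := fun m s => w ^ m / m.factorial * Grec (s + 1 + m)
  have hF_diff : ∀ m, Differentiable ℂ (F m) := fun m =>
    (differentiable_Grec.comp ((differentiable_id.add_const 1).add_const _)).const_mul _
  have hF_deriv : ∀ m s, deriv (F m) s = G 1 (s + 1 + m) * w ^ m / m.factorial := fun m s => by
    simp only [F, G, iteratedDeriv_one, add_assoc, deriv_const_mul_field', deriv_comp_add_const]
    ring
  obtain ⟨C, hC⟩ := exists_bound_Grec_add_nat (isCompact_closedBall (ν + 1) 1)
  have hF_le : ∀ m, ∀ s ∈ Metric.ball ν 1, ‖F m s‖ ≤ ‖w‖ ^ m / m.factorial * C :=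
    fun m s hs => by
      have hs' : s + 1 ∈ Metric.closedBall (ν + 1) 1 := by
        simpa only [Metric.mem_closedBall, dist_add_right] using (Metric.mem_ball.1 hs).le
      simp only [F, norm_mul, norm_div, norm_pow, Complex.norm_natCast]
      gcongr
      exact hC _ hs' m
  have hu : Summable fun m : ℕ => ‖w‖ ^ m / m.factorial * C :=
    (Real.summable_pow_div_factorial ‖w‖).mul_right C
  have hν : ν ∈ Metric.ball ν 1 := Metric.mem_ball_self one_pos
  have h_diffOn := Complex.differentiableOn_tsum_of_summable_norm hu
    (fun m => (hF_diff m).differentiableOn) Metric.isOpen_ball hF_le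
  have h_deriv := Complex.hasSum_deriv_of_summable_norm hu
    (fun m => (hF_diff m).differentiableOn) Metric.isOpen_ball hF_le hν
  simp only [hF_deriv] at h_deriv
  rw [h_deriv.tsum_eq]
  exact (h_diffOn.differentiableAt (Metric.isOpen_ball.mem_nhds hν)).hasDerivAt

theorem besselJ_eq_exp_mul_tsum (z : ℝ) (ν : ℂ) :
    besselJ z ν = Complex.exp (ν * Complex.log ((z : ℂ) / 2)) *
      ∑' m : ℕ, (-(z : ℂ) ^ 2 / 4) ^ m / m.factorial * Grec (ν + 1 + m) := by
  simp only [besselJ, Grec, div_eq_mul_inv, mul_inv, mul_assoc]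

theorem hasDerivAt_besselJ (z : ℝ) (ν : ℂ) :
    HasDerivAt (fun ν => besselJ z ν)
      (besselJ z ν * Complex.log ((z : ℂ) / 2) +
        Complex.exp (ν * Complex.log ((z : ℂ) / 2)) *
          ∑' m : ℕ, G 1 (ν + 1 + m) * (-(z : ℂ) ^ 2 / 4) ^ m / (m.factorial : ℂ)) ν := by
  have h_exp : HasDerivAt (fun s => Complex.exp (s * Complex.log ((z : ℂ) / 2)))
      (Complex.exp (ν * Complex.log ((z : ℂ) / 2)) * Complex.log ((z : ℂ) / 2)) ν := by
    simpa using ((hasDerivAt_id ν).mul_const _).cexp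
  simp only [besselJ_eq_exp_mul_tsum]
  refine (h_exp.fun_mul (hasDerivAt_tsum_mul_Grec (-(z : ℂ) ^ 2 / 4) ν)).congr_deriv ?_
  ring

theorem deriv_besselJ_order_general (z : ℝ) :
    Differentiable ℂ (fun ν => besselJ z ν) ∧
    ∀ ν : ℂ, deriv (fun ν => besselJ z ν) ν =
      besselJ z ν * Complex.log ((z : ℂ) / 2) +
        Complex.exp (ν * Complex.log ((z : ℂ) / 2)) *
          ∑' m : ℕ, G 1 (ν + 1 + m) * (-(z : ℂ) ^ 2 / 4) ^ m / (m.factorial : ℂ) :=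
  ⟨fun ν => (hasDerivAt_besselJ z ν).differentiableAt, fun ν => (hasDerivAt_besselJ z ν).deriv⟩

/-- For real `z > 0`, `ν ↦ J_ν(z)` is entire and
`∂/∂ν J_ν(z) = J_ν(z) log(z/2) + (z/2)^ν ∑ₘ G⁽¹⁾(ν+1+m) (−z²/4)ᵐ/m!`. -/
theorem deriv_besselJ_order (z : ℝ) (hz : 0 < z) :
    Differentiable ℂ (fun ν => besselJ z ν) ∧
    ∀ ν : ℂ, deriv (fun ν => besselJ z ν) ν =
      besselJ z ν * Complex.log ((z : ℂ) / 2) +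
        Complex.exp (ν * Complex.log ((z : ℂ) / 2)) *
          ∑' m : ℕ, G 1 (ν + 1 + m) * (-(z : ℂ) ^ 2 / 4) ^ m / (m.factorial : ℂ) :=
  deriv_besselJ_order_general z
end

section
/- For every integer k ≥ 0, every complex t, and every complex z with |z| < 1, ∑_{m=0}^∞ k! · P_m^{(k)}(t) · (−z)^m/m! = (−1)^k · (1+z)^{−t} · [log(1+z)]^k, where (1+z)^{−t} and log(1+z) are taken with the principal branch. -/
open scoped BigOperators

/-!
For `k = 0` this is the binomial series `(1 + z)^(-t) = ∑ (-t choose m) z^m`, whose `m`-th term is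
`(t)_m (-z)^m / m!`. For fixed `z` its partial sums are entire in `t` and converge locally uniformly
(dominated on `‖t‖ ≤ R` by the series at `t = R`), so by Weierstrass' theorem they may be
differentiated `k` times termwise in `t`, and `dᵏ/dtᵏ (1 + z)^(-t) = (-log (1 + z))ᵏ (1 + z)^(-t)`.
-/

open Filter

lemma mem_eball_zero_one {z : ℂ} (hz : ‖z‖ < 1) : z ∈ Metric.eball (0 : ℂ) 1 := by
  rwa [Metric.mem_eball, edist_zero_right, ← ofReal_norm, ENNReal.ofReal_lt_one]

lemma norm_poch_le {t : ℂ} {R : ℝ} (ht : ‖t‖ ≤ R) (m : ℕ) : ‖poch t m‖ ≤ ‖poch (R : ℂ) m‖ := by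
  simp only [poch, norm_prod]
  refine Finset.prod_le_prod (fun _ _ => norm_nonneg _) fun i _ => ?_
  have hRi : (R : ℂ) + i = ((R + i : ℝ) : ℂ) := by push_cast; rfl
  calc ‖t + i‖ ≤ ‖t‖ + i := by simpa using norm_add_le t i
    _ ≤ R + i := by gcongr
    _ = ‖(R : ℂ) + i‖ := by
      rw [hRi, Complex.norm_real, Real.norm_of_nonneg (by positivity [(norm_nonneg t).trans ht])]

open Polynomial in
lemma choose_neg_mul_factorial (t : ℂ) (m : ℕ) :
    Ring.choose (-t) m * m.factorial = (-1) ^ m * poch t m := by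
  rw [mul_comm, ← nsmul_eq_mul, ← Ring.descPochhammer_eq_factorial_smul_choose, ← aeval_eq_smeval,
    aeval_def, ← eval_map, descPochhammer_map, descPochhammer_eval_eq_prod_range, poch]
  simpa [neg_sub_left, add_comm] using
    Finset.prod_neg (s := Finset.range m) (f := fun j : ℕ => t + j)

lemma binomialSeries_neg_apply (t z : ℂ) (m : ℕ) :
    binomialSeries ℂ (-t) m (fun _ => z) = poch t m * (-z) ^ m / m.factorial := by
  have hm : (m.factorial : ℂ) ≠ 0 := by exact_mod_cast m.factorial_ne_zero
  rw [binomialSeries_apply, List.ofFn_const, List.prod_replicate, smul_eq_mul, neg_pow,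
    eq_div_iff hm, mul_right_comm, choose_neg_mul_factorial]
  ring

lemma hasSum_poch_mul_neg_pow (t : ℂ) {z : ℂ} (hz : ‖z‖ < 1) :
    HasSum (fun m : ℕ => poch t m * (-z) ^ m / m.factorial) ((1 + z) ^ (-t)) := by
  simpa only [zero_add, binomialSeries_neg_apply] using
    (Complex.one_add_cpow_hasFPowerSeriesOnBall_zero (a := -t)).hasSum (mem_eball_zero_one hz)

lemma tendstoUniformlyOn_poch_series {z : ℂ} (hz : ‖z‖ < 1) (R : ℝ) :
    TendstoUniformlyOn (fun s : Finset ℕ => fun t : ℂ => ∑ m ∈ s, poch t m * (-z) ^ m / m.factorial)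
      (fun t => (1 + z) ^ (-t)) atTop (Metric.closedBall 0 R) := by
  have hsum := (binomialSeries ℂ (-(R : ℂ))).summable_norm_apply
    (Metric.eball_subset_eball binomialSeries_radius_ge_one (mem_eball_zero_one hz))
  simp only [binomialSeries_neg_apply] at hsum
  refine (tendstoUniformlyOn_tsum hsum fun m t ht => ?_).congr_right
    fun t _ => (hasSum_poch_mul_neg_pow t hz).tsum_eq
  rw [mem_closedBall_zero_iff] at ht
  simp only [norm_div, norm_mul]
  gcongr
  exact norm_poch_le ht m

lemma tendstoLocallyUniformlyOn_poch_series {z : ℂ} (hz : ‖z‖ < 1) :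
    TendstoLocallyUniformlyOn
      (fun s : Finset ℕ => fun t : ℂ => ∑ m ∈ s, poch t m * (-z) ^ m / m.factorial)
      (fun t => (1 + z) ^ (-t)) atTop Set.univ := by
  rw [tendstoLocallyUniformlyOn_iff_forall_isCompact isOpen_univ]
  intro K _ hK
  obtain ⟨R, hKR⟩ := hK.isBounded.subset_closedBall 0
  exact (tendstoUniformlyOn_poch_series hz R).mono hKR

theorem TendstoLocallyUniformlyOn.iteratedDeriv {E ι : Type*} [NormedAddCommGroup E]
    [NormedSpace ℂ E] [CompleteSpace E] {φ : Filter ι} {F : ι → ℂ → E} {f : ℂ → E} {U : Set ℂ}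
    (hf : TendstoLocallyUniformlyOn F f φ U) (hF : ∀ᶠ n in φ, DifferentiableOn ℂ (F n) U)
    (hU : IsOpen U) (k : ℕ) :
    TendstoLocallyUniformlyOn (fun n => iteratedDeriv k (F n)) (iteratedDeriv k f) φ U := by
  induction k with
  | zero => simpa only [iteratedDeriv_zero] using hf
  | succ k ih =>
    simp only [iteratedDeriv_succ]
    refine ih.deriv ?_ hU
    filter_upwards [hF] with n hn
    rw [iteratedDeriv_eq_iterate]
    exact ((hn.analyticOnNhd hU).iterated_deriv k).differentiableOn

lemma iteratedDeriv_cpow_neg {w : ℂ} (hw : w ≠ 0) (k : ℕ) :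
    iteratedDeriv k (fun s : ℂ => w ^ (-s)) = fun s => (-Complex.log w) ^ k * w ^ (-s) := by
  simp_rw [Complex.cpow_def_of_ne_zero hw, mul_neg, ← neg_mul, iteratedDeriv_cexp_const_mul]

lemma hasSum_iteratedDeriv_poch (k : ℕ) (t : ℂ) {z : ℂ} (hz : ‖z‖ < 1) :
    HasSum (fun m : ℕ => iteratedDeriv k (fun s => poch s m) t * (-z) ^ m / m.factorial)
      ((-Complex.log (1 + z)) ^ k * (1 + z) ^ (-t)) := by
  have hdiff (s : Finset ℕ) : DifferentiableOn ℂ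
      (fun t : ℂ => ∑ m ∈ s, poch t m * (-z) ^ m / m.factorial) Set.univ := by
    unfold poch; fun_prop
  have h := ((tendstoLocallyUniformlyOn_poch_series hz).iteratedDeriv
    (Eventually.of_forall hdiff) isOpen_univ k).tendsto_at (Set.mem_univ t)
  have hz₁ : 1 + z ≠ 0 := Complex.slitPlane_ne_zero (Complex.mem_slitPlane_of_norm_lt_one hz)
  rw [iteratedDeriv_cpow_neg hz₁] at h
  refine h.congr fun s => ?_
  rw [iteratedDeriv_fun_sum fun m _ => by unfold poch; fun_prop]
  simp only [iteratedDeriv_div_const, iteratedDeriv_mul_const_field]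

/-- Generating function of the derivatives of the Pochhammer symbol:
`∑ₘ k! P_m^{(k)}(t) (−z)ᵐ/m! = (−1)ᵏ (1+z)^{−t} [log(1+z)]ᵏ` for `|z| < 1`
(principal branch). -/
theorem P_generating (k : ℕ) (t z : ℂ) (hz : ‖z‖ < 1) :
    HasSum (fun m : ℕ => (k.factorial : ℂ) * P m k t * (-z) ^ m / (m.factorial : ℂ))
      ((-1) ^ k * (1 + z) ^ (-t) * (Complex.log (1 + z)) ^ k) := by
  have hP (m : ℕ) : (k.factorial : ℂ) * P m k t = iteratedDeriv k (fun s => poch s m) t := by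
    rw [P, mul_inv_cancel_left₀ (by exact_mod_cast k.factorial_ne_zero)]
  simp only [hP]
  convert hasSum_iteratedDeriv_poch k t hz using 1
  ring
end

section
/- For all integers m ≥ k ≥ 0 and every complex t, P_m^{(k)}(t) = (−1)^{m−k} · ∑_{l=0}^{m−k} (−1)^l · C(m,l) · s(m−l, k) · (t)_l. -/
open scoped BigOperators

section Aux
open Polynomial Finset

lemma poch_eq (t : ℂ) (m : ℕ) : poch t m = (ascPochhammer ℂ m).eval t := by
  induction m with
  | zero => simp [poch]
  | succ n ih => rw [poch, Finset.prod_range_succ, ← poch, ih, ascPochhammer_succ_eval]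

lemma iteratedDeriv_polyeval (k : ℕ) (p : ℂ[X]) :
    iteratedDeriv k (fun x : ℂ => p.eval x) = fun t => (Polynomial.derivative^[k] p).eval t := by
  induction k generalizing p with
  | zero => simp [iteratedDeriv]
  | succ n ih =>
    rw [iteratedDeriv_succ']
    have : deriv (fun x : ℂ => p.eval x) = fun x => p.derivative.eval x := by
      funext x; exact Polynomial.deriv p
    rw [this, ih, Function.iterate_succ_apply]

lemma P_eq_taylor (m k : ℕ) (t : ℂ) :
    P m k t = (taylor t (ascPochhammer ℂ m)).coeff k := by
  rw [P, show (fun s => poch s m) = fun s => (ascPochhammer ℂ m).eval s from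
    funext fun s => poch_eq s m, iteratedDeriv_polyeval, taylor_coeff,
    ← Polynomial.factorial_smul_hasseDeriv (R := ℂ) (k := k)]
  simp only [LinearMap.smul_apply]
  rw [eval_smul, nsmul_eq_mul, ← mul_assoc,
    inv_mul_cancel₀ (by exact_mod_cast k.factorial_ne_zero), one_mul]

lemma comp_neg_X_coeff {R : Type*} [CommRing R] (p : R[X]) (k : ℕ) :
    (p.comp (-X)).coeff k = (-1) ^ k * p.coeff k := by
  induction p using Polynomial.induction_on' with
  | add p q hp hq => simp [add_comp, hp, hq, mul_add]
  | monomial n a =>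
    rw [monomial_comp, show ((-X : R[X]))^n = C ((-1:R)^n) * X ^ n by
      rw [neg_pow]; simp, ← mul_assoc, ← C_mul]
    simp only [coeff_C_mul, coeff_X_pow, coeff_monomial, mul_ite, mul_zero, mul_one]
    by_cases h : n = k
    · simp [h, mul_comm]
    · simp only [h, if_false, mul_zero]
      rw [if_neg (fun hh => h hh.symm)]

lemma desc_eq_comp_neg (n : ℕ) :
    descPochhammer ℤ n = (-1 : ℤ[X]) ^ n * (ascPochhammer ℤ n).comp (-X) := by
  apply Polynomial.funext
  intro r
  rw [eval_mul, eval_pow, eval_comp]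
  simp only [eval_neg, eval_X, eval_one, eval_neg]
  rw [ascPochhammer_eval_neg_eq_descPochhammer, ← mul_assoc, ← mul_pow]
  simp

lemma asc_coeff_int (n k : ℕ) (hk : k ≤ n) :
    (ascPochhammer ℤ n).coeff k = (-1) ^ (n - k) * (descPochhammer ℤ n).coeff k := by
  rw [desc_eq_comp_neg]
  rw [show ((-1 : ℤ[X]))^n = C ((-1:ℤ)^n) by simp, coeff_C_mul, comp_neg_X_coeff]
  rw [← mul_assoc, ← pow_add, ← mul_assoc, ← pow_add]
  have h2 : n - k + n + k = 2 * n := by omega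
  rw [h2, pow_mul]
  simp

lemma smeval_desc (n : ℕ) (x : ℂ) :
    (descPochhammer ℤ n).smeval x = (descPochhammer ℂ n).eval x := by
  rw [← Polynomial.aeval_eq_smeval, aeval_def, ← eval_map, descPochhammer_map]

lemma desc_eval_add (m : ℕ) (r s : ℂ) :
    (descPochhammer ℂ m).eval (r + s) = ∑ l ∈ range (m + 1),
      (m.choose l : ℂ) * ((descPochhammer ℂ l).eval r * (descPochhammer ℂ (m - l)).eval s) := by
  have h := Ring.descPochhammer_smeval_add (R := ℂ) m (Commute.all r s)
  rw [smeval_desc] at h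
  rw [h, Finset.Nat.sum_antidiagonal_eq_sum_range_succ_mk]
  exact Finset.sum_congr rfl fun l hl => by rw [smeval_desc, smeval_desc]

lemma asc_eval_add (m : ℕ) (t x : ℂ) :
    (ascPochhammer ℂ m).eval (t + x) = ∑ l ∈ range (m + 1),
      (m.choose l : ℂ) * ((ascPochhammer ℂ l).eval t * (ascPochhammer ℂ (m - l)).eval x) := by
  have key : ∀ (n : ℕ) (y : ℂ), (descPochhammer ℂ n).eval (-y) =
      (-1) ^ n * (ascPochhammer ℂ n).eval y := by
    intro n y
    have h0 := ascPochhammer_eval_neg_eq_descPochhammer (R := ℂ) (-y) n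
    rw [neg_neg] at h0
    rw [h0, ← mul_assoc, ← mul_pow]
    simp
  have h := desc_eval_add m (-t) (-x)
  rw [show (-t) + (-x) = -(t + x) by ring, key] at h
  have h2 : ∀ l ∈ range (m + 1),
      (m.choose l : ℂ) * ((descPochhammer ℂ l).eval (-t) * (descPochhammer ℂ (m - l)).eval (-x))
      = (-1) ^ m * ((m.choose l : ℂ) *
        ((ascPochhammer ℂ l).eval t * (ascPochhammer ℂ (m - l)).eval x)) := by
    intro l hl
    rw [key, key]
    have hm : (-1 : ℂ) ^ l * (-1) ^ (m - l) = (-1) ^ m := by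
      rw [← pow_add, show l + (m - l) = m by simp at hl; omega]
    linear_combination (m.choose l : ℂ) * (ascPochhammer ℂ l).eval t *
      (ascPochhammer ℂ (m - l)).eval x * hm
  rw [Finset.sum_congr rfl h2, ← Finset.mul_sum] at h
  exact mul_left_cancel₀ (by simp : ((-1 : ℂ)) ^ m ≠ 0) h

lemma asc_comp_eq (m : ℕ) (t : ℂ) :
    (ascPochhammer ℂ m).comp (X + C t) = ∑ l ∈ range (m + 1),
      C ((m.choose l : ℂ) * (ascPochhammer ℂ l).eval t) * ascPochhammer ℂ (m - l) := by
  apply Polynomial.funext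
  intro x
  rw [eval_comp, eval_finset_sum]
  simp only [eval_add, eval_X, eval_C, eval_mul]
  rw [show x + t = t + x by ring, asc_eval_add]
  exact Finset.sum_congr rfl fun l _ => by ring

end Aux

open Polynomial Finset

/-- Explicit expression
`P_m^{(k)}(t) = (−1)^{m−k} ∑_{l=0}^{m−k} (−1)ˡ C(m,l) s(m−l,k) (t)_l` for `m ≥ k`. -/
theorem P_explicit (m k : ℕ) (hkm : k ≤ m) (t : ℂ) :
    P m k t = (-1) ^ (m - k) *
      ∑ l ∈ Finset.range (m - k + 1),
        (-1) ^ l * (m.choose l : ℂ) * ((stirS (m - l) k : ℤ) : ℂ) * poch t l := by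
  rw [P_eq_taylor, taylor_apply, asc_comp_eq, finset_sum_coeff]
  simp only [coeff_C_mul]
  rw [← Finset.sum_subset (Finset.range_subset_range.mpr (by omega : m - k + 1 ≤ m + 1))
    (fun l hl hl2 => ?_), Finset.mul_sum]
  · refine Finset.sum_congr rfl fun l hl => ?_
    have hlk : l ≤ m - k := by simpa [Nat.lt_succ_iff] using hl
    have hk' : k ≤ m - l := by omega
    have hcast : (ascPochhammer ℂ (m - l)).coeff k
        = (((ascPochhammer ℤ (m - l)).coeff k : ℤ) : ℂ) := by
      rw [← ascPochhammer_map (Int.castRingHom ℂ), coeff_map]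
      rfl
    rw [hcast, asc_coeff_int _ _ hk']
    push_cast
    rw [← poch_eq, stirS]
    have hsgn : ((-1 : ℂ)) ^ (m - l - k) = (-1) ^ (m - k) * (-1) ^ l := by
      rw [← pow_add, show m - k + l = m - l - k + 2 * l by omega, pow_add, pow_mul]
      simp
    rw [show m - l - k = m - l - k from rfl]
    push_cast [hsgn]
    ring
  · have : m - l < k := by simp [Nat.lt_succ_iff] at hl hl2; omega
    rw [coeff_eq_zero_of_natDegree_lt (by rwa [ascPochhammer_natDegree]), mul_zero]
end

section
/- For all integers m ≥ 0 and k ≥ 0, the value at t = 1 of the normalized k-th derivative of the reciprocal Pochhammer symbol is Q_m^{(k)}(1) = (−1)^k · Ĥ_m^{(k)} / m!. -/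
open scoped BigOperators

/-!
Partial fractions give `1/(t)_{n+1} = (1/n!) ∑_{j ≤ n} (-1)^j C(n,j) / (t + j)`, and each
`1/(t + j)` has `k`-th derivative `(-1)^k k! / (t + j)^(k+1)`. At `t = 1` the identity
`C(n,j) / (n! (j+1)) = C(n+1,j+1) / (n+1)!` turns the differentiated sum into `Ĥ_{n+1}^{(k)}`.
-/

open Finset Filter Topology
open scoped Nat

theorem iteratedDeriv_inv_add_const {𝕜 : Type*} [NontriviallyNormedField 𝕜] (k : ℕ) (a x : 𝕜) :
    iteratedDeriv k (fun s ↦ (s + a)⁻¹) x = (-1) ^ k * k ! / (x + a) ^ (k + 1) := by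
  rw [congrFun (iteratedDeriv_comp_add_const k Inv.inv a) x, iteratedDeriv_eq_iterate,
    iter_deriv_inv, show (-1 - k : ℤ) = -((k + 1 : ℕ) : ℤ) by push_cast; ring, zpow_neg,
    zpow_natCast, div_eq_mul_inv]

theorem choose_div_factorial_eq_succ {n j : ℕ} (hj : j ≤ n) :
    (n.choose j : ℂ) / n ! = (n + 1).choose j / (n + 1)! * (n + 1 - j) := by
  have h := congrArg (Nat.cast : ℕ → ℂ) (Nat.choose_mul_succ_eq n j)
  push_cast [Nat.cast_sub (by omega : j ≤ n + 1)] at h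
  have : (n ! : ℂ) ≠ 0 := Nat.cast_ne_zero.2 n.factorial_ne_zero
  rw [Nat.factorial_succ]
  push_cast
  field_simp
  linear_combination h

theorem choose_div_factorial_div_succ (n j : ℕ) :
    (n.choose j : ℂ) / n ! / (j + 1) = (n + 1).choose (j + 1) / (n + 1)! := by
  have h : ((n + 1) * n.choose j : ℂ) = (n + 1).choose (j + 1) * (j + 1) := by
    exact_mod_cast Nat.add_one_mul_choose_eq n j
  have : (n ! : ℂ) ≠ 0 := Nat.cast_ne_zero.2 n.factorial_ne_zero
  rw [Nat.factorial_succ]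
  push_cast
  field_simp
  linear_combination h

theorem inv_poch_succ_eq_sum (n : ℕ) {s : ℂ} (hs : ∀ j ≤ n, s + j ≠ 0) :
    (poch s (n + 1))⁻¹ = ∑ j ∈ range (n + 1), (-1) ^ j * n.choose j / n ! * (s + j)⁻¹ := by
  induction n with
  | zero => simp [poch]
  | succ n ih =>
    set b : ℕ → ℂ := fun j ↦ (-1) ^ j * (n + 1).choose j / (n + 1)!
    have hcoeff : ∀ j ≤ n, (-1) ^ j * n.choose j / n ! = b j * (n + 1 - j) := fun j hj ↦ by
      simp only [b, mul_div_assoc, choose_div_factorial_eq_succ hj, mul_assoc]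
    have hsplit : ∀ j ≤ n,
        (s + j)⁻¹ * (s + (n + 1 : ℕ))⁻¹ * (n + 1 - j) = (s + j)⁻¹ - (s + (n + 1 : ℕ))⁻¹ :=
      fun j hj ↦ by
        have := hs j (by omega)
        have := hs (n + 1) le_rfl
        field_simp
        push_cast
        ring
    have hlast : b (n + 1) = -∑ j ∈ range (n + 1), b j := by
      have h := congrArg (Int.cast : ℤ → ℂ)
        (Int.alternating_sum_range_choose_eq_choose (n := n) (m := n))
      push_cast at h
      simp only [b, ← sum_div, h, Nat.choose_self, Nat.cast_one, pow_succ]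
      ring
    calc (poch s (n + 1 + 1))⁻¹
        = (poch s (n + 1))⁻¹ * (s + (n + 1 : ℕ))⁻¹ := by
          rw [poch, prod_range_succ, mul_inv]; rfl
      _ = ∑ j ∈ range (n + 1), b j * ((s + j)⁻¹ - (s + (n + 1 : ℕ))⁻¹) := by
          rw [ih fun j hj ↦ hs j (by omega), sum_mul]
          refine sum_congr rfl fun j hj ↦ ?_
          have hj : j ≤ n := Nat.lt_succ_iff.1 (mem_range.1 hj)
          rw [hcoeff j hj, ← hsplit j hj]
          ring
      _ = ∑ j ∈ range (n + 1 + 1), b j * (s + j)⁻¹ := by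
          simp only [sum_range_succ _ (n + 1), hlast, mul_sub, sum_sub_distrib, ← sum_mul]
          ring

theorem Q_succ_eq_sum (n k : ℕ) {t : ℂ} (ht : ∀ j ≤ n, t + j ≠ 0) :
    Q (n + 1) k t =
      (-1) ^ k * ∑ j ∈ range (n + 1), (-1) ^ j * n.choose j / n ! / (t + j) ^ (k + 1) := by
  have hpoles : ∀ᶠ s in 𝓝 t, ∀ j ≤ n, s + (j : ℂ) ≠ 0 :=
    (eventually_all_finite (Set.finite_Iic n)).2 fun j hj ↦
      (continuous_add_const _).continuousAt.eventually_ne (ht j hj)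
  have hpf : (fun s ↦ (poch s (n + 1))⁻¹) =ᶠ[𝓝 t]
      fun s ↦ ∑ j ∈ range (n + 1), (-1) ^ j * n.choose j / n ! * (s + j)⁻¹ :=
    hpoles.mono fun s hs ↦ inv_poch_succ_eq_sum n hs
  have hsmooth : ∀ j ∈ range (n + 1),
      ContDiffAt ℂ k (fun s : ℂ ↦ (-1) ^ j * n.choose j / n ! * (s + j)⁻¹) t := fun j hj ↦
    contDiffAt_const.mul ((contDiffAt_id.add contDiffAt_const).inv
      (ht j (Nat.lt_succ_iff.1 (mem_range.1 hj))))
  rw [Q, hpf.iteratedDeriv_eq, iteratedDeriv_fun_sum hsmooth, mul_sum, mul_sum]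
  refine sum_congr rfl fun j _ ↦ ?_
  rw [iteratedDeriv_const_mul_field, iteratedDeriv_inv_add_const]
  have : (k ! : ℂ) ≠ 0 := Nat.cast_ne_zero.2 k.factorial_ne_zero
  field_simp

theorem Hhat_succ (n k : ℕ) :
    (Hhat (n + 1) k : ℂ) =
      ∑ j ∈ range (n + 1), (-1 : ℂ) ^ j * (n + 1).choose (j + 1) / (j + 1) ^ k := by
  rw [Hhat, if_neg n.succ_ne_zero, ← Finset.Ico_add_one_right_eq_Icc, sum_Ico_eq_sum_range]
  push_cast
  refine sum_congr (by simp) fun j _ ↦ ?_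
  simp [add_comm]

/-- `Q_m^{(k)}(1) = (−1)ᵏ Ĥ_m^{(k)} / m!`. -/
theorem Q_at_one (m k : ℕ) :
    Q m k 1 = (-1) ^ k * ((Hhat m k : ℝ) : ℂ) / (m.factorial : ℂ) := by
  cases m with
  | zero => cases k <;> simp [Q, poch, Hhat, iteratedDeriv_const]
  | succ n =>
    rw [Q_succ_eq_sum n k fun j _ ↦ by rw [add_comm]; exact Nat.cast_add_one_ne_zero j,
      Hhat_succ, mul_div_assoc, sum_div]
    congr 1
    refine sum_congr rfl fun j _ ↦ ?_
    calc (-1) ^ j * n.choose j / n ! / (1 + j : ℂ) ^ (k + 1)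
        = (-1) ^ j * (n.choose j / n ! / (j + 1)) / (j + 1 : ℂ) ^ k := by
          rw [add_comm (1 : ℂ), pow_succ', ← div_div]; ring
      _ = _ := by rw [choose_div_factorial_div_succ]; ring
end
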